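/- arXiv:astro-ph/0409635 — 6 statements merged into one kernel-verified Lean document; each statement's English description precedes it below -/
import Mathlib

section
/- Let E be a real normed vector space, U ⊆ E open, φ : U → (E →L[ℝ] ℝ) a continuous 1-form, λ : U → ℝ a positive C¹ function, and let φ̃ = φ − d ln λ be the gauge-transformed 1-form, i.e. φ̃(x)(v) = φ(x)(v) − λ(x)⁻¹ · (Dλ(x))(v) where Dλ is the Fréchet derivative. For any C¹ curve c : [0,1] → U, if l and l̃ denote the length transfers of φ and φ̃ along c respectively, then for all t ∈ [0,1]: l̃(t) = (λ(c(0)) / λ(c(t))) · l(t). -/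
/-! Along the curve, the correction term `λ⁻¹ · Dλ(c)(c')` is the derivative of `log (λ ∘ c)`,
so by the fundamental theorem of calculus its integral over `[0, t]` is
`log λ(c(t)) − log λ(c(0))`; exponentiating turns this difference into the factor
`λ(c(0)) / λ(c(t))`. -/

open Set intervalIntegral MeasureTheory

theorem integral_div_eq_log_sub_log {g g' : ℝ → ℝ} {a b : ℝ}
    (hg : ∀ x ∈ uIcc a b, HasDerivAt g (g' x) x) (hg0 : ∀ x ∈ uIcc a b, g x ≠ 0)
    (hint : IntervalIntegrable (fun x => g' x / g x) volume a b) :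
    ∫ x in a..b, g' x / g x = Real.log (g b) - Real.log (g a) :=
  integral_eq_sub_of_hasDerivAt (fun x hx => (hg x hx).log (hg0 x hx)) hint

theorem exp_integral_sub_div_eq {ψ g g' : ℝ → ℝ} {a b : ℝ}
    (hg : ∀ x ∈ uIcc a b, HasDerivAt g (g' x) x) (hg_pos : ∀ x ∈ uIcc a b, 0 < g x)
    (hψ : IntervalIntegrable ψ volume a b)
    (hint : IntervalIntegrable (fun x => g' x / g x) volume a b) :
    Real.exp (∫ x in a..b, (ψ x - g' x / g x)) = g a / g b * Real.exp (∫ x in a..b, ψ x) := by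
  have ha := hg_pos a left_mem_uIcc
  have hb := hg_pos b right_mem_uIcc
  rw [integral_sub hψ hint, integral_div_eq_log_sub_log hg (fun x hx => (hg_pos x hx).ne') hint,
    Real.exp_sub, Real.exp_sub, Real.exp_log ha, Real.exp_log hb]
  field_simp

theorem length_transfer_gauge_transformation_general
    {E : Type*} [NormedAddCommGroup E] [NormedSpace ℝ E]
    (U : Set E)
    (φ : E → (E →L[ℝ] ℝ)) (hφ : ContinuousOn φ U)
    (lam : E → ℝ) (Dlam : E → (E →L[ℝ] ℝ))
    (hlam_pos : ∀ x ∈ U, 0 < lam x)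
    (hlam_deriv : ∀ x ∈ U, HasFDerivAt lam (Dlam x) x)
    (hDlam_cont : ContinuousOn Dlam U)
    (φt : E → (E →L[ℝ] ℝ))
    (hφt : ∀ x ∈ U, ∀ v : E, φt x v = φ x v - (lam x)⁻¹ * Dlam x v)
    (c : ℝ → E) (c' : ℝ → E)
    (hcU : ∀ t ∈ Set.Icc (0:ℝ) 1, c t ∈ U)
    (hc : ∀ t ∈ Set.Icc (0:ℝ) 1, HasDerivAt c (c' t) t)
    (hc' : ContinuousOn c' (Set.Icc (0:ℝ) 1))
    (l lt : ℝ → ℝ)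
    (hl : ∀ t, l t = Real.exp (∫ τ in (0:ℝ)..t, φ (c τ) (c' τ)))
    (hlt : ∀ t, lt t = Real.exp (∫ τ in (0:ℝ)..t, φt (c τ) (c' τ))) :
    ∀ t ∈ Set.Icc (0:ℝ) 1, lt t = (lam (c 0) / lam (c t)) * l t := by
  intro t ht
  have hsub : uIcc 0 t ⊆ Icc (0:ℝ) 1 := by
    rw [uIcc_of_le ht.1]
    exact Icc_subset_Icc le_rfl ht.2
  have hc_cont : ContinuousOn c (Icc 0 1) := fun τ hτ => (hc τ hτ).continuousAt.continuousWithinAt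
  have hlam_cont : ContinuousOn lam U :=
    fun x hx => (hlam_deriv x hx).continuousAt.continuousWithinAt
  have hlamc : ∀ τ ∈ Icc (0:ℝ) 1, HasDerivAt (fun τ => lam (c τ)) (Dlam (c τ) (c' τ)) τ :=
    fun τ hτ => (hlam_deriv _ (hcU τ hτ)).comp_hasDerivAt τ (hc τ hτ)
  have hφ_int : IntervalIntegrable (fun τ => φ (c τ) (c' τ)) volume 0 t :=
    (((hφ.comp hc_cont hcU).clm_apply hc').mono hsub).intervalIntegrable
  have hcorr_int : IntervalIntegrable (fun τ => Dlam (c τ) (c' τ) / lam (c τ)) volume 0 t :=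
    ((((hDlam_cont.comp hc_cont hcU).clm_apply hc').div (hlam_cont.comp hc_cont hcU)
      fun τ hτ => (hlam_pos _ (hcU τ hτ)).ne').mono hsub).intervalIntegrable
  have hφt_eq : ∫ τ in (0:ℝ)..t, φt (c τ) (c' τ)
      = ∫ τ in (0:ℝ)..t, (φ (c τ) (c' τ) - Dlam (c τ) (c' τ) / lam (c τ)) :=
    integral_congr fun τ hτ => by rw [hφt _ (hcU τ (hsub hτ)), inv_mul_eq_div]
  rw [hlt, hl, hφt_eq, exp_integral_sub_div_eq (fun τ hτ => hlamc τ (hsub hτ))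
    (fun τ hτ => hlam_pos _ (hcU τ (hsub hτ))) hφ_int hcorr_int]

/-- Transformation law of the length transfer under a gauge transformation
`φ̃ = φ − d ln λ`: the transformed length transfer satisfies
`l̃(t) = (λ(c(0)) / λ(c(t))) · l(t)`. -/
theorem length_transfer_gauge_transformation
    {E : Type*} [NormedAddCommGroup E] [NormedSpace ℝ E]
    (U : Set E) (hU : IsOpen U)
    (φ : E → (E →L[ℝ] ℝ)) (hφ : ContinuousOn φ U)
    (lam : E → ℝ) (Dlam : E → (E →L[ℝ] ℝ))
    (hlam_pos : ∀ x ∈ U, 0 < lam x)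
    (hlam_deriv : ∀ x ∈ U, HasFDerivAt lam (Dlam x) x)
    (hDlam_cont : ContinuousOn Dlam U)
    (φt : E → (E →L[ℝ] ℝ))
    (hφt : ∀ x ∈ U, ∀ v : E, φt x v = φ x v - (lam x)⁻¹ * Dlam x v)
    (c : ℝ → E) (c' : ℝ → E)
    (hcU : ∀ t ∈ Set.Icc (0:ℝ) 1, c t ∈ U)
    (hc : ∀ t ∈ Set.Icc (0:ℝ) 1, HasDerivAt c (c' t) t)
    (hc' : ContinuousOn c' (Set.Icc (0:ℝ) 1))
    (l lt : ℝ → ℝ)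
    (hl : ∀ t, l t = Real.exp (∫ τ in (0:ℝ)..t, φ (c τ) (c' τ)))
    (hlt : ∀ t, lt t = Real.exp (∫ τ in (0:ℝ)..t, φt (c τ) (c' τ))) :
    ∀ t ∈ Set.Icc (0:ℝ) 1, lt t = (lam (c 0) / lam (c t)) * l t :=
  length_transfer_gauge_transformation_general U φ hφ lam Dlam hlam_pos hlam_deriv hDlam_cont φt hφt
    c c' hcU hc hc' l lt hl hlt
end

section
/- Let E be a real normed vector space, U ⊆ E open, φ : U → (E →L[ℝ] ℝ) a continuous 1-form, g a map assigning to each point x ∈ U a symmetric bilinear form g_x : E × E → ℝ, λ : U → ℝ a positive C¹ function, and set g̃_x = λ(x)² g_x and φ̃ = φ − d ln λ. Let c : [0,1] → U be a C¹ curve and l, l̃ the length transfers of φ, φ̃ along c. Then for any vectors ξ, η ∈ E with g_{c(0)}(ξ, ξ) ≠ 0 and any t ∈ [0,1]: l̃(t)² · g̃_{c(t)}(η, η) / g̃_{c(0)}(ξ, ξ) = l(t)² · g_{c(t)}(η, η) / g_{c(0)}(ξ, ξ). That is, the length-transfer-corrected quotient of squared lengths of vectors at different points is independent of the gauge. -/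
/-!
Along the curve, the correction term `d ln λ (c') = (ln λ ∘ c)'` integrates to
`ln λ(c t) - ln λ(c 0)`, so the length transfer picks up the factor `λ(c 0) / λ(c t)`
under a change of gauge. Squared, it cancels the conformal factors `λ(c t)² / λ(c 0)²`
by which `g̃` differs from `g`.
-/

open Set Real

section

variable {E : Type*} [NormedAddCommGroup E] [NormedSpace ℝ E]

noncomputable def lengthTransfer (φ : E → E →L[ℝ] ℝ) (c c' : ℝ → E) (t : ℝ) : ℝ :=
  exp (∫ τ in (0:ℝ)..t, φ (c τ) (c' τ))

theorem lengthTransfer_gauge_change {U : Set E} {φ φt Dlam : E → E →L[ℝ] ℝ} {lam : E → ℝ}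
    {c c' : ℝ → E} {t : ℝ} (hφ : ContinuousOn φ U) (hlam_pos : ∀ x ∈ U, 0 < lam x)
    (hlam_deriv : ∀ x ∈ U, HasFDerivAt lam (Dlam x) x) (hDlam_cont : ContinuousOn Dlam U)
    (hφt : ∀ x ∈ U, ∀ v, φt x v = φ x v - (lam x)⁻¹ * Dlam x v)
    (hcU : MapsTo c (uIcc 0 t) U) (hc : ∀ τ ∈ uIcc 0 t, HasDerivAt c (c' τ) τ)
    (hc' : ContinuousOn c' (uIcc 0 t)) :
    lengthTransfer φt c c' t = lengthTransfer φ c c' t * (lam (c 0) / lam (c t)) := by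
  have hc_cont : ContinuousOn c (uIcc 0 t) :=
    fun τ hτ => (hc τ hτ).continuousAt.continuousWithinAt
  have hlam_cont : ContinuousOn lam U :=
    fun x hx => (hlam_deriv x hx).continuousAt.continuousWithinAt
  have hdlog : ∀ τ ∈ uIcc 0 t, HasDerivAt (fun s => log (lam (c s)))
      ((lam (c τ))⁻¹ * Dlam (c τ) (c' τ)) τ := fun τ hτ =>
    (hasDerivAt_log (hlam_pos _ (hcU hτ)).ne').comp (h := fun s => lam (c s)) τ
      ((hlam_deriv _ (hcU hτ)).comp_hasDerivAt τ (hc τ hτ))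
  have hdlog_cont : ContinuousOn (fun τ => (lam (c τ))⁻¹ * Dlam (c τ) (c' τ)) (uIcc 0 t) :=
    ((hlam_cont.comp hc_cont hcU).inv₀ fun τ hτ => (hlam_pos _ (hcU hτ)).ne').mul
      ((hDlam_cont.comp hc_cont hcU).clm_apply hc')
  have hφ_int : IntervalIntegrable (fun τ => φ (c τ) (c' τ)) MeasureTheory.volume 0 t :=
    ((hφ.comp hc_cont hcU).clm_apply hc').intervalIntegrable
  have hintegral : ∫ τ in (0:ℝ)..t, φt (c τ) (c' τ)
      = (∫ τ in (0:ℝ)..t, φ (c τ) (c' τ)) - (log (lam (c t)) - log (lam (c 0))) := by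
    rw [← intervalIntegral.integral_eq_sub_of_hasDerivAt hdlog hdlog_cont.intervalIntegrable,
      ← intervalIntegral.integral_sub hφ_int hdlog_cont.intervalIntegrable]
    exact intervalIntegral.integral_congr fun τ hτ => hφt _ (hcU hτ) _
  rw [lengthTransfer, lengthTransfer, hintegral, exp_sub, exp_sub,
    exp_log (hlam_pos _ (hcU right_mem_uIcc)), exp_log (hlam_pos _ (hcU left_mem_uIcc)),
    div_div_eq_mul_div, mul_div_assoc]

end

theorem gauge_invariant_length_comparison_general
    {E : Type*} [NormedAddCommGroup E] [NormedSpace ℝ E]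
    (U : Set E)
    (φ : E → (E →L[ℝ] ℝ)) (hφ : ContinuousOn φ U)
    (g : E → (E →ₗ[ℝ] E →ₗ[ℝ] ℝ))
    (lam : E → ℝ) (Dlam : E → (E →L[ℝ] ℝ))
    (hlam_pos : ∀ x ∈ U, 0 < lam x)
    (hlam_deriv : ∀ x ∈ U, HasFDerivAt lam (Dlam x) x)
    (hDlam_cont : ContinuousOn Dlam U)
    (gt : E → (E →ₗ[ℝ] E →ₗ[ℝ] ℝ))
    (hgt : ∀ x ∈ U, ∀ ξ η : E, gt x ξ η = (lam x) ^ 2 * g x ξ η)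
    (φt : E → (E →L[ℝ] ℝ))
    (hφt : ∀ x ∈ U, ∀ v : E, φt x v = φ x v - (lam x)⁻¹ * Dlam x v)
    (c : ℝ → E) (c' : ℝ → E)
    (hcU : ∀ t ∈ Set.Icc (0:ℝ) 1, c t ∈ U)
    (hc : ∀ t ∈ Set.Icc (0:ℝ) 1, HasDerivAt c (c' t) t)
    (hc' : ContinuousOn c' (Set.Icc (0:ℝ) 1))
    (l lt : ℝ → ℝ)
    (hl : ∀ t, l t = Real.exp (∫ τ in (0:ℝ)..t, φ (c τ) (c' τ)))
    (hlt : ∀ t, lt t = Real.exp (∫ τ in (0:ℝ)..t, φt (c τ) (c' τ)))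
    (ξ η : E) (hξ : g (c 0) ξ ξ ≠ 0) :
    ∀ t ∈ Set.Icc (0:ℝ) 1,
      (lt t) ^ 2 * gt (c t) η η / gt (c 0) ξ ξ =
        (l t) ^ 2 * g (c t) η η / g (c 0) ξ ξ := by
  intro t ht
  have h0 : (0:ℝ) ∈ Icc (0:ℝ) 1 := left_mem_Icc.mpr zero_le_one
  have hsub : uIcc 0 t ⊆ Icc 0 1 := uIcc_subset_Icc h0 ht
  have hlt_eq : lt t = l t * (lam (c 0) / lam (c t)) := by
    rw [hl, hlt]
    exact lengthTransfer_gauge_change hφ hlam_pos hlam_deriv hDlam_cont hφt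
      (fun τ hτ => hcU τ (hsub hτ)) (fun τ hτ => hc τ (hsub hτ)) (hc'.mono hsub)
  have hlam0 := hlam_pos _ (hcU 0 h0)
  have hlamt := hlam_pos _ (hcU t ht)
  rw [hgt _ (hcU t ht), hgt _ (hcU 0 h0), hlt_eq]
  field_simp

/-- Weyl's gauge invariant comparison of length ratios (Lemma 1 of the paper):
the length-transfer-corrected quotient of squared lengths of vectors at different
points is independent of the gauge. -/
theorem gauge_invariant_length_comparison
    {E : Type*} [NormedAddCommGroup E] [NormedSpace ℝ E]
    (U : Set E) (hU : IsOpen U)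
    (φ : E → (E →L[ℝ] ℝ)) (hφ : ContinuousOn φ U)
    (g : E → (E →ₗ[ℝ] E →ₗ[ℝ] ℝ))
    (hg_symm : ∀ x ∈ U, ∀ ξ η : E, g x ξ η = g x η ξ)
    (lam : E → ℝ) (Dlam : E → (E →L[ℝ] ℝ))
    (hlam_pos : ∀ x ∈ U, 0 < lam x)
    (hlam_deriv : ∀ x ∈ U, HasFDerivAt lam (Dlam x) x)
    (hDlam_cont : ContinuousOn Dlam U)
    (gt : E → (E →ₗ[ℝ] E →ₗ[ℝ] ℝ))
    (hgt : ∀ x ∈ U, ∀ ξ η : E, gt x ξ η = (lam x) ^ 2 * g x ξ η)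
    (φt : E → (E →L[ℝ] ℝ))
    (hφt : ∀ x ∈ U, ∀ v : E, φt x v = φ x v - (lam x)⁻¹ * Dlam x v)
    (c : ℝ → E) (c' : ℝ → E)
    (hcU : ∀ t ∈ Set.Icc (0:ℝ) 1, c t ∈ U)
    (hc : ∀ t ∈ Set.Icc (0:ℝ) 1, HasDerivAt c (c' t) t)
    (hc' : ContinuousOn c' (Set.Icc (0:ℝ) 1))
    (l lt : ℝ → ℝ)
    (hl : ∀ t, l t = Real.exp (∫ τ in (0:ℝ)..t, φ (c τ) (c' τ)))
    (hlt : ∀ t, lt t = Real.exp (∫ τ in (0:ℝ)..t, φt (c τ) (c' τ)))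
    (ξ η : E) (hξ : g (c 0) ξ ξ ≠ 0) :
    ∀ t ∈ Set.Icc (0:ℝ) 1,
      (lt t) ^ 2 * gt (c t) η η / gt (c 0) ξ ξ =
        (l t) ^ 2 * g (c t) η η / g (c 0) ξ ξ :=
  gauge_invariant_length_comparison_general U φ hφ g lam Dlam hlam_pos hlam_deriv hDlam_cont gt hgt
    φt hφt c c' hcU hc hc' l lt hl hlt ξ η hξ
end

section
/- Let E be a real normed vector space, U ⊆ E open, and φ : U → (E →L[ℝ] ℝ) a 1-form. (i) There exists a positive differentiable function λ : U → ℝ with φ(x) = λ(x)⁻¹ · Dλ(x) for all x ∈ U (so that the gauge-transformed length connection φ̃ = φ − d ln λ vanishes identically, i.e. the gauge is semi-Riemannian) if and only if φ is exact, i.e. φ = DF for some differentiable F : U → ℝ. (ii) If U is preconnected and λ₁, λ₂ are two positive differentiable functions on U with λ₁⁻¹ Dλ₁ = λ₂⁻¹ Dλ₂ = φ, then there is a constant C > 0 with λ₁ = C · λ₂; that is, two semi-Riemannian gauges differ only by a constant on each connected component. -/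
/-!
Since `Dλ = λ • φ` says exactly that `ln λ` is a primitive of `φ`, the gauge factors are the
exponentials of primitives of `φ`. On a preconnected open set two primitives differ by a constant,
so two gauge factors differ by a positive constant factor.
-/

open Real

section

variable {E : Type*} [NormedAddCommGroup E] [NormedSpace ℝ E]

theorem hasFDerivAt_log_of_hasFDerivAt_smul {f : E → ℝ} {φ : E →L[ℝ] ℝ} {x : E}
    (hf : HasFDerivAt f (f x • φ) x) (hx : f x ≠ 0) :
    HasFDerivAt (fun y => log (f y)) φ x := by
  simpa only [smul_smul, inv_mul_cancel₀ hx, one_smul] using HasFDerivAt.log hf hx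

theorem IsOpen.exists_pos_const_mul_of_hasFDerivAt_smul {U : Set E} (hU : IsOpen U)
    (hUc : IsPreconnected U) {φ : E → (E →L[ℝ] ℝ)} {lam₁ lam₂ : E → ℝ}
    (hpos₁ : ∀ x ∈ U, 0 < lam₁ x) (hder₁ : ∀ x ∈ U, HasFDerivAt lam₁ (lam₁ x • φ x) x)
    (hpos₂ : ∀ x ∈ U, 0 < lam₂ x) (hder₂ : ∀ x ∈ U, HasFDerivAt lam₂ (lam₂ x • φ x) x) :
    ∃ C : ℝ, 0 < C ∧ ∀ x ∈ U, lam₁ x = C * lam₂ x := by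
  have hlog₁ x (hx : x ∈ U) : HasFDerivAt (fun y => log (lam₁ y)) (φ x) x :=
    hasFDerivAt_log_of_hasFDerivAt_smul (hder₁ x hx) (hpos₁ x hx).ne'
  have hlog₂ x (hx : x ∈ U) : HasFDerivAt (fun y => log (lam₂ y)) (φ x) x :=
    hasFDerivAt_log_of_hasFDerivAt_smul (hder₂ x hx) (hpos₂ x hx).ne'
  obtain ⟨a, ha⟩ := hU.exists_eq_add_of_fderiv_eq hUc
    (fun x hx => (hlog₁ x hx).differentiableAt.differentiableWithinAt)
    (fun x hx => (hlog₂ x hx).differentiableAt.differentiableWithinAt)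
    (fun x hx => (hlog₁ x hx).fderiv.trans (hlog₂ x hx).fderiv.symm)
  refine ⟨exp a, exp_pos a, fun x hx => ?_⟩
  calc lam₁ x = exp (log (lam₁ x)) := (exp_log (hpos₁ x hx)).symm
    _ = exp (log (lam₂ x) + a) := congrArg exp (ha hx)
    _ = exp a * lam₂ x := by rw [exp_add, exp_log (hpos₂ x hx), mul_comm]

end

/-- Exactness formulation of Weyl's theorem on semi-Riemannian gauges:
(i) there is a positive differentiable gauge factor `λ` with `φ = λ⁻¹·Dλ`
(so that `φ̃ = φ − d ln λ = 0`, a semi-Riemannian gauge) iff `φ` is exact;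
(ii) on a preconnected `U`, two such gauge factors differ by a positive constant. -/
theorem semi_riemannian_gauge_iff_exact
    {E : Type*} [NormedAddCommGroup E] [NormedSpace ℝ E]
    (U : Set E) (hU : IsOpen U)
    (φ : E → (E →L[ℝ] ℝ)) :
    ((∃ lam : E → ℝ, (∀ x ∈ U, 0 < lam x) ∧
        (∀ x ∈ U, HasFDerivAt lam (lam x • φ x) x)) ↔
      (∃ F : E → ℝ, ∀ x ∈ U, HasFDerivAt F (φ x) x)) ∧
    (IsPreconnected U →
      ∀ lam₁ lam₂ : E → ℝ,
        (∀ x ∈ U, 0 < lam₁ x) → (∀ x ∈ U, HasFDerivAt lam₁ (lam₁ x • φ x) x) →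
        (∀ x ∈ U, 0 < lam₂ x) → (∀ x ∈ U, HasFDerivAt lam₂ (lam₂ x • φ x) x) →
        ∃ C : ℝ, 0 < C ∧ ∀ x ∈ U, lam₁ x = C * lam₂ x) := by
  refine ⟨⟨?_, ?_⟩, fun hUc _ _ => hU.exists_pos_const_mul_of_hasFDerivAt_smul hUc⟩
  · rintro ⟨lam, hpos, hder⟩
    exact ⟨fun y => log (lam y),
      fun x hx => hasFDerivAt_log_of_hasFDerivAt_smul (hder x hx) (hpos x hx).ne'⟩
  · rintro ⟨F, hF⟩
    exact ⟨fun y => exp (F y), fun x _ => exp_pos _, fun x hx => HasFDerivAt.exp (hF x hx)⟩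
end

section
/- Let E be a real normed vector space, U ⊆ E open, φ : U → (E →L[ℝ] ℝ) a 1-form, and f : U → ℝ a differentiable function with f(x) ≠ 0 for all x ∈ U. If the covariant derivative of f (as a scalar Weyl field of weight 1) vanishes, i.e. Df(x) − f(x) · φ(x) = 0 as a linear functional for every x ∈ U, then φ(x) = D(ln |f|)(x) for all x ∈ U; in particular φ is exact, so the length connection is integrable (the Weylian manifold is semi-Riemannian locally). -/
/-! `Df = f • φ` with `f` nowhere zero says that `φ = f⁻¹ • Df`, the logarithmic derivative of `f`,
which is the derivative of `log |f|` wherever `f ≠ 0`. -/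

theorem HasFDerivAt.log_abs {E : Type*} [NormedAddCommGroup E] [NormedSpace ℝ E]
    {f : E → ℝ} {f' : E →L[ℝ] ℝ} {x : E} (hf : HasFDerivAt f f' x) (hx : f x ≠ 0) :
    HasFDerivAt (fun y => Real.log |f y|) ((f x)⁻¹ • f') x := by
  simpa only [Real.log_abs] using hf.log hx

theorem inv_smul_eq_of_sub_smul_eq_zero {K M : Type*} [DivisionRing K] [AddCommGroup M] [Module K M]
    {a : K} {v w : M} (ha : a ≠ 0) (h : v - a • w = 0) : a⁻¹ • v = w := by
  rw [sub_eq_zero.mp h, inv_smul_smul₀ ha]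

theorem integrable_of_covariantly_constant_scalar_general
    {E : Type*} [NormedAddCommGroup E] [NormedSpace ℝ E]
    (U : Set E)
    (φ : E → (E →L[ℝ] ℝ))
    (f : E → ℝ) (Df : E → (E →L[ℝ] ℝ))
    (hf_ne : ∀ x ∈ U, f x ≠ 0)
    (hf_deriv : ∀ x ∈ U, HasFDerivAt f (Df x) x)
    (hcov : ∀ x ∈ U, Df x - f x • φ x = 0) :
    ∀ x ∈ U, HasFDerivAt (fun y => Real.log |f y|) (φ x) x := by
  intro x hx
  rw [← inv_smul_eq_of_sub_smul_eq_zero (hf_ne x hx) (hcov x hx)]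
  exact (hf_deriv x hx).log_abs (hf_ne x hx)

/-- Audretsch/Gähler/Straumann (Lemma 2 of the paper): if a nowhere-vanishing
scalar Weyl field `f` of weight 1 has vanishing covariant derivative
`Df − f·φ = 0`, then `φ = D(ln |f|)`; in particular `φ` is exact, i.e. the
length connection is integrable. -/
theorem integrable_of_covariantly_constant_scalar
    {E : Type*} [NormedAddCommGroup E] [NormedSpace ℝ E]
    (U : Set E) (hU : IsOpen U)
    (φ : E → (E →L[ℝ] ℝ))
    (f : E → ℝ) (Df : E → (E →L[ℝ] ℝ))
    (hf_ne : ∀ x ∈ U, f x ≠ 0)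
    (hf_deriv : ∀ x ∈ U, HasFDerivAt f (Df x) x)
    (hcov : ∀ x ∈ U, Df x - f x • φ x = 0) :
    ∀ x ∈ U, HasFDerivAt (fun y => Real.log |f y|) (φ x) x :=
  integrable_of_covariantly_constant_scalar_general U φ f Df hf_ne hf_deriv hcov
end

section
/- Let I ⊆ ℝ be an open interval, κ ∈ ℝ, and f : I → ℝ a C² function with f(τ) > 0 for all τ ∈ I. Suppose the Robertson–Walker scalar curvature expression R̃(τ) := 6·((f'(τ)/f(τ))² + κ/f(τ)² + f''(τ)/f(τ)) is nonzero for every τ ∈ I. Then the following are equivalent: (a) there exists a constant c > 0 such that |R̃(τ)| = c / f(τ)² for all τ ∈ I (i.e. the Weyl gauge factor √|R̃| is proportional to the Hubble gauge factor 1/f, so Hubble gauge and Weyl gauge coincide); (b) there exists b ∈ ℝ such that f''(τ)·ف(τ) + f'(τ)² = b for all τ ∈ I. In particular (a) holds whenever f' is constant on I (the case of a time-homogeneous Hubble form). -/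
/-!
Writing `g = f''·f + f'² + κ`, the curvature is `R̃ = 6 g / f²`, so the Weyl gauge factor
`√|R̃|` is proportional to `1/f` exactly when `|g|` is constant. Since `R̃` never vanishes,
`g` is a continuous nowhere-zero function on an interval, hence of constant sign, so `|g|`
is constant iff `g` is. If `f'` is constant then `f'' = 0` and `g = f'² + κ` is constant.
-/

open Set

theorem IsPreconnected.exists_forall_abs_eq_iff {α : Type*} [TopologicalSpace α] {S : Set α}
    {G : α → ℝ} (hS : IsPreconnected S) (hG : ContinuousOn G S) (hG_ne : ∀ x ∈ S, G x ≠ 0) :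
    (∃ c, 0 < c ∧ ∀ x ∈ S, |G x| = c) ↔ ∃ b, ∀ x ∈ S, G x = b := by
  rcases S.eq_empty_or_nonempty with rfl | ⟨y, hy⟩
  · exact ⟨fun _ => ⟨0, by simp⟩, fun _ => ⟨1, one_pos, by simp⟩⟩
  constructor
  · rintro ⟨c, -, hc⟩
    have hsq : EqOn (G ^ 2) ((fun _ => G y) ^ 2) S := fun x hx => by
      simp only [Pi.pow_apply, sq_eq_sq_iff_abs_eq_abs, hc x hx, hc y hy]
    exact ⟨G y, hS.eq_of_sq_eq hG continuousOn_const hsq (fun _ => hG_ne y hy) hy rfl⟩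
  · rintro ⟨b, hb⟩
    exact ⟨|b|, abs_pos.mpr (hb y hy ▸ hG_ne y hy), fun x hx => by rw [hb x hx]⟩

theorem exists_forall_eq_iff_of_affine {α K : Type*} [Field K] {S : Set α} {u v : α → K}
    {a d : K} (ha : a ≠ 0) (huv : ∀ x ∈ S, v x = a * u x + d) :
    (∃ b, ∀ x ∈ S, u x = b) ↔ ∃ b, ∀ x ∈ S, v x = b := by
  constructor
  · rintro ⟨b, hb⟩
    exact ⟨a * b + d, fun x hx => by rw [huv x hx, hb x hx]⟩
  · rintro ⟨b, hb⟩
    refine ⟨(b - d) / a, fun x hx => ?_⟩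
    rw [eq_div_iff ha, ← hb x hx, huv x hx]
    ring

theorem IsOpen.hasDerivAt_eq_zero_of_eqOn_const {𝕜 F : Type*} [NontriviallyNormedField 𝕜]
    [NormedAddCommGroup F] [NormedSpace 𝕜 F] {U : Set 𝕜} (hU : IsOpen U) {φ : 𝕜 → F} {k φ' : F}
    {x : 𝕜} (hφ : ∀ y ∈ U, φ y = k) (hx : x ∈ U) (h : HasDerivAt φ φ' x) : φ' = 0 :=
  h.unique <| (hasDerivAt_const x k).congr_of_eventuallyEq <|
    Filter.eventuallyEq_of_mem (hU.mem_nhds hx) hφ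

theorem rwScalarCurvature_mul_sq {x a b κ : ℝ} (hx : x ≠ 0) :
    6 * ((a / x) ^ 2 + κ / x ^ 2 + b / x) * x ^ 2 = 6 * (b * x + a ^ 2) + 6 * κ := by
  field_simp
  ring

/-- Proposition 1 of the paper: in a Robertson–Walker–Weyl manifold with warp
function `f > 0` and spatial curvature `κ`, Hubble gauge and Weyl gauge coincide
(i.e. `|R̃| = c/f²` for a constant `c > 0`, where `R̃` is the scalar curvature in
semi-Riemannian gauge) iff `f''·f + f'² = const`; in particular they coincide
whenever `f'` is constant (time-homogeneous Hubble form). -/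
theorem hubble_gauge_eq_weyl_gauge_iff
    (I : Set ℝ) (hI_open : IsOpen I) (hI_conn : I.OrdConnected)
    (κ : ℝ) (f f' f'' : ℝ → ℝ)
    (hf_pos : ∀ τ ∈ I, 0 < f τ)
    (hf : ∀ τ ∈ I, HasDerivAt f (f' τ) τ)
    (hf' : ∀ τ ∈ I, HasDerivAt f' (f'' τ) τ)
    (hf''_cont : ContinuousOn f'' I)
    (Rt : ℝ → ℝ)
    (hRt : ∀ τ ∈ I, Rt τ = 6 * ((f' τ / f τ) ^ 2 + κ / (f τ) ^ 2 + f'' τ / f τ))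
    (hRt_ne : ∀ τ ∈ I, Rt τ ≠ 0) :
    ((∃ c : ℝ, 0 < c ∧ ∀ τ ∈ I, |Rt τ| = c / (f τ) ^ 2) ↔
      (∃ b : ℝ, ∀ τ ∈ I, f'' τ * f τ + (f' τ) ^ 2 = b)) ∧
    ((∃ k : ℝ, ∀ τ ∈ I, f' τ = k) →
      ∃ c : ℝ, 0 < c ∧ ∀ τ ∈ I, |Rt τ| = c / (f τ) ^ 2) := by
  set G : ℝ → ℝ := fun τ => Rt τ * f τ ^ 2
  have hf_sq_pos : ∀ τ ∈ I, 0 < f τ ^ 2 := fun τ hτ => pow_pos (hf_pos τ hτ) 2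
  have hG : ∀ τ ∈ I, G τ = 6 * (f'' τ * f τ + f' τ ^ 2) + 6 * κ := fun τ hτ => by
    rw [← rwScalarCurvature_mul_sq (hf_pos τ hτ).ne', ← hRt τ hτ]
  have hf_cont : ContinuousOn f I := fun τ hτ => (hf τ hτ).continuousAt.continuousWithinAt
  have hf'_cont : ContinuousOn f' I := fun τ hτ => (hf' τ hτ).continuousAt.continuousWithinAt
  have hG_cont : ContinuousOn G I :=
    (show ContinuousOn (fun τ => 6 * (f'' τ * f τ + f' τ ^ 2) + 6 * κ) I by fun_prop).congr hG
  have hG_ne : ∀ τ ∈ I, G τ ≠ 0 := fun τ hτ => mul_ne_zero (hRt_ne τ hτ) (hf_sq_pos τ hτ).ne'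
  have hweyl : ∀ c, ∀ τ ∈ I, |Rt τ| = c / f τ ^ 2 ↔ |G τ| = c := fun c τ hτ => by
    rw [eq_div_iff (hf_sq_pos τ hτ).ne', abs_mul, abs_of_pos (hf_sq_pos τ hτ)]
  have hweyl_iff_hubble :=
    (exists_congr fun c => and_congr_right fun _ => forall₂_congr (hweyl c)).trans <|
      (hI_conn.isPreconnected.exists_forall_abs_eq_iff hG_cont hG_ne).trans
        (exists_forall_eq_iff_of_affine (by norm_num) hG).symm
  refine ⟨hweyl_iff_hubble, fun ⟨k, hk⟩ => hweyl_iff_hubble.mpr ⟨k ^ 2, fun τ hτ => ?_⟩⟩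
  rw [hI_open.hasDerivAt_eq_zero_of_eqOn_const hk hτ (hf' τ hτ), hk τ hτ]
  ring
end

section
/- Let E be a real normed vector space, U ⊆ E open, φ : U → (E →L[ℝ] ℝ) a continuous 1-form, g a field of symmetric bilinear forms on E indexed by points of U, X : U → E a vector field, and γ : [0,1] → U a C¹ curve. Let l be the length transfer of φ along γ with l(0) = 1, and define α(t) = l(t)² · g_{γ(t)}(γ'(t), X(γ(t))). Let λ : U → ℝ be a positive C¹ gauge factor and consider the transformed data g̃ = λ² g, φ̃ = φ − d ln λ, X̃ = λ⁻¹ X, with corresponding length transfer l̃ (l̃(0) = 1) and α̃(t) = l̃(t)² · g̃_{γ(t)}(γ'(t), X̃(γ(t))). If α(1) ≠ 0, then α̃(1) ≠ 0 and l̃(1) · α̃(0) / α̃(1) = l(1) · α(0) / α(1). That is, the redshift function z defined by z + 1 = l(1)·α(0)/α(1) is gauge invariant. -/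
/-!
Along the curve, `φ̃ = φ − d ln λ` integrates to `∫φ − ln λ(γ t) + ln λ(γ 0)`, so the length
transfer picks up the factor `l̃(t) = l(t) · λ(γ 0)/λ(γ t)`. Together with `g̃ = λ²g` and
`X̃ = λ⁻¹X` this gives `α̃(t) = (λ(γ 0)²/λ(γ t)) · α(t)`, and all powers of `λ` cancel in
`l(1) · α(0)/α(1)`.
-/

open Set Real intervalIntegral MeasureTheory

theorem integral_inv_mul_deriv_eq_log_sub {u u' : ℝ → ℝ} {a b : ℝ}
    (hu : ∀ t ∈ uIcc a b, HasDerivAt u (u' t) t) (hu_ne : ∀ t ∈ uIcc a b, u t ≠ 0)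
    (hint : IntervalIntegrable (fun t => (u t)⁻¹ * u' t) volume a b) :
    ∫ t in a..b, (u t)⁻¹ * u' t = log (u b) - log (u a) :=
  integral_eq_sub_of_hasDerivAt
    (fun t ht => by simpa only [div_eq_inv_mul] using (hu t ht).log (hu_ne t ht)) hint

theorem exp_integral_sub_logDeriv {f u u' : ℝ → ℝ} {a b : ℝ}
    (hf : IntervalIntegrable f volume a b)
    (hu : ∀ t ∈ uIcc a b, HasDerivAt u (u' t) t) (hu_pos : ∀ t ∈ uIcc a b, 0 < u t)
    (hint : IntervalIntegrable (fun t => (u t)⁻¹ * u' t) volume a b) :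
    exp (∫ t in a..b, (f t - (u t)⁻¹ * u' t)) = exp (∫ t in a..b, f t) * (u a / u b) := by
  have hlog := integral_inv_mul_deriv_eq_log_sub hu (fun t ht => (hu_pos t ht).ne') hint
  rw [integral_sub hf hint, hlog, exp_sub, exp_sub, exp_log (hu_pos b right_mem_uIcc),
    exp_log (hu_pos a left_mem_uIcc)]
  field_simp

theorem exp_integral_gauge_transform {E : Type*} [NormedAddCommGroup E] [NormedSpace ℝ E]
    {U : Set E} {φ φt : E → (E →L[ℝ] ℝ)} {lam : E → ℝ} {Dlam : E → (E →L[ℝ] ℝ)}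
    {γ γ' : ℝ → E} {a b : ℝ}
    (hφ : ContinuousOn φ U) (hγU : MapsTo γ (uIcc a b) U)
    (hγ : ∀ t ∈ uIcc a b, HasDerivAt γ (γ' t) t) (hγ' : ContinuousOn γ' (uIcc a b))
    (hlam_pos : ∀ x ∈ U, 0 < lam x) (hlam_deriv : ∀ x ∈ U, HasFDerivAt lam (Dlam x) x)
    (hDlam_cont : ContinuousOn Dlam U)
    (hφt : ∀ x ∈ U, ∀ v : E, φt x v = φ x v - (lam x)⁻¹ * Dlam x v) :
    exp (∫ τ in a..b, φt (γ τ) (γ' τ)) =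
      exp (∫ τ in a..b, φ (γ τ) (γ' τ)) * (lam (γ a) / lam (γ b)) := by
  have hγ_cont : ContinuousOn γ (uIcc a b) := fun t ht =>
    (hγ t ht).continuousAt.continuousWithinAt
  have hlamγ : ∀ t ∈ uIcc a b, HasDerivAt (fun s => lam (γ s)) (Dlam (γ t) (γ' t)) t :=
    fun t ht => (hlam_deriv _ (hγU ht)).comp_hasDerivAt t (hγ t ht)
  have hφ_int : IntervalIntegrable (fun t => φ (γ t) (γ' t)) volume a b :=
    ((hφ.comp hγ_cont hγU).clm_apply hγ').intervalIntegrable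
  have hdlog_int :
      IntervalIntegrable (fun t => (lam (γ t))⁻¹ * Dlam (γ t) (γ' t)) volume a b := by
    refine ContinuousOn.intervalIntegrable (ContinuousOn.mul ?_ ?_)
    · exact ContinuousOn.inv₀ (fun t ht => (hlamγ t ht).continuousAt.continuousWithinAt)
        fun t ht => (hlam_pos _ (hγU ht)).ne'
    · exact (hDlam_cont.comp hγ_cont hγU).clm_apply hγ'
  rw [integral_congr fun t ht => hφt _ (hγU ht) (γ' t)]
  exact exp_integral_sub_logDeriv hφ_int hlamγ (fun t ht => hlam_pos _ (hγU ht)) hdlog_int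

theorem redshift_gauge_invariance_general
    {E : Type*} [NormedAddCommGroup E] [NormedSpace ℝ E]
    (U : Set E)
    (φ : E → (E →L[ℝ] ℝ)) (hφ : ContinuousOn φ U)
    (g : E → (E →ₗ[ℝ] E →ₗ[ℝ] ℝ))
    (X : E → E)
    (γ : ℝ → E) (γ' : ℝ → E)
    (hγU : ∀ t ∈ Set.Icc (0:ℝ) 1, γ t ∈ U)
    (hγ : ∀ t ∈ Set.Icc (0:ℝ) 1, HasDerivAt γ (γ' t) t)
    (hγ' : ContinuousOn γ' (Set.Icc (0:ℝ) 1))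
    (lam : E → ℝ) (Dlam : E → (E →L[ℝ] ℝ))
    (hlam_pos : ∀ x ∈ U, 0 < lam x)
    (hlam_deriv : ∀ x ∈ U, HasFDerivAt lam (Dlam x) x)
    (hDlam_cont : ContinuousOn Dlam U)
    (gt : E → (E →ₗ[ℝ] E →ₗ[ℝ] ℝ))
    (hgt : ∀ x ∈ U, ∀ ξ η : E, gt x ξ η = (lam x) ^ 2 * g x ξ η)
    (φt : E → (E →L[ℝ] ℝ))
    (hφt : ∀ x ∈ U, ∀ v : E, φt x v = φ x v - (lam x)⁻¹ * Dlam x v)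
    (Xt : E → E) (hXt : ∀ x ∈ U, Xt x = (lam x)⁻¹ • X x)
    (l lt : ℝ → ℝ)
    (hl : ∀ t, l t = Real.exp (∫ τ in (0:ℝ)..t, φ (γ τ) (γ' τ)))
    (hlt : ∀ t, lt t = Real.exp (∫ τ in (0:ℝ)..t, φt (γ τ) (γ' τ)))
    (α αt : ℝ → ℝ)
    (hα : ∀ t, α t = (l t) ^ 2 * g (γ t) (γ' t) (X (γ t)))
    (hαt : ∀ t, αt t = (lt t) ^ 2 * gt (γ t) (γ' t) (Xt (γ t)))
    (hα1 : α 1 ≠ 0) :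
    αt 1 ≠ 0 ∧ lt 1 * αt 0 / αt 1 = l 1 * α 0 / α 1 := by
  have hlt_eq : ∀ t ∈ Icc (0:ℝ) 1, lt t = l t * (lam (γ 0) / lam (γ t)) := fun t ht => by
    have hsub : uIcc 0 t ⊆ Icc 0 1 := uIcc_subset_Icc (left_mem_Icc.2 zero_le_one) ht
    rw [hlt, hl]
    exact exp_integral_gauge_transform hφ (fun s hs => hγU s (hsub hs))
      (fun s hs => hγ s (hsub hs)) (hγ'.mono hsub) hlam_pos hlam_deriv hDlam_cont hφt
  have hαt_eq : ∀ t ∈ Icc (0:ℝ) 1, αt t = lam (γ 0) ^ 2 / lam (γ t) * α t := fun t ht => by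
    have hpos := hlam_pos _ (hγU t ht)
    rw [hαt, hα, hlt_eq t ht, hgt _ (hγU t ht), hXt _ (hγU t ht), map_smul, smul_eq_mul]
    field_simp
  have hpos₀ := hlam_pos _ (hγU 0 (left_mem_Icc.2 zero_le_one))
  have hpos₁ := hlam_pos _ (hγU 1 (right_mem_Icc.2 zero_le_one))
  rw [hlt_eq 1 (right_mem_Icc.2 zero_le_one), hαt_eq 0 (left_mem_Icc.2 zero_le_one),
    hαt_eq 1 (right_mem_Icc.2 zero_le_one)]
  refine ⟨mul_ne_zero (by positivity) hα1, ?_⟩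
  field_simp

/-- Lemma 5 of the paper (gauge invariance of the redshift function): with
`α(t) = l(t)² g_{γ(t)}(γ'(t), X(γ(t)))` and the gauge-transformed data
`g̃ = λ²g`, `φ̃ = φ − d ln λ`, `X̃ = λ⁻¹X`, if `α(1) ≠ 0` then `α̃(1) ≠ 0` and
`l̃(1)·α̃(0)/α̃(1) = l(1)·α(0)/α(1)`; i.e. the redshift `z + 1 = l(1)·α(0)/α(1)`
is gauge invariant. -/
theorem redshift_gauge_invariance
    {E : Type*} [NormedAddCommGroup E] [NormedSpace ℝ E]
    (U : Set E) (hU : IsOpen U)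
    (φ : E → (E →L[ℝ] ℝ)) (hφ : ContinuousOn φ U)
    (g : E → (E →ₗ[ℝ] E →ₗ[ℝ] ℝ))
    (hg_symm : ∀ x ∈ U, ∀ ξ η : E, g x ξ η = g x η ξ)
    (X : E → E)
    (γ : ℝ → E) (γ' : ℝ → E)
    (hγU : ∀ t ∈ Set.Icc (0:ℝ) 1, γ t ∈ U)
    (hγ : ∀ t ∈ Set.Icc (0:ℝ) 1, HasDerivAt γ (γ' t) t)
    (hγ' : ContinuousOn γ' (Set.Icc (0:ℝ) 1))
    (lam : E → ℝ) (Dlam : E → (E →L[ℝ] ℝ))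
    (hlam_pos : ∀ x ∈ U, 0 < lam x)
    (hlam_deriv : ∀ x ∈ U, HasFDerivAt lam (Dlam x) x)
    (hDlam_cont : ContinuousOn Dlam U)
    (gt : E → (E →ₗ[ℝ] E →ₗ[ℝ] ℝ))
    (hgt : ∀ x ∈ U, ∀ ξ η : E, gt x ξ η = (lam x) ^ 2 * g x ξ η)
    (φt : E → (E →L[ℝ] ℝ))
    (hφt : ∀ x ∈ U, ∀ v : E, φt x v = φ x v - (lam x)⁻¹ * Dlam x v)
    (Xt : E → E) (hXt : ∀ x ∈ U, Xt x = (lam x)⁻¹ • X x)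
    (l lt : ℝ → ℝ)
    (hl : ∀ t, l t = Real.exp (∫ τ in (0:ℝ)..t, φ (γ τ) (γ' τ)))
    (hlt : ∀ t, lt t = Real.exp (∫ τ in (0:ℝ)..t, φt (γ τ) (γ' τ)))
    (α αt : ℝ → ℝ)
    (hα : ∀ t, α t = (l t) ^ 2 * g (γ t) (γ' t) (X (γ t)))
    (hαt : ∀ t, αt t = (lt t) ^ 2 * gt (γ t) (γ' t) (Xt (γ t)))
    (hα1 : α 1 ≠ 0) :
    αt 1 ≠ 0 ∧ lt 1 * αt 0 / αt 1 = l 1 * α 0 / α 1 :=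
  redshift_gauge_invariance_general U φ hφ g X γ γ' hγU hγ hγ' lam Dlam hlam_pos hlam_deriv
    hDlam_cont gt hgt φt hφt Xt hXt l lt hl hlt α αt hα hαt hα1
end
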